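/- For every nonnegative integer n and all real x, y, the degenerate Bell polynomials satisfy the binomial-type addition formula Bel_{n,λ}(x+y) = ∑_{l=0}^{n} C(n,l) · Bel_{l,λ}(x) · Bel_{n−l,λ}(y). -/

import Mathlib

open Finset

/-- Degenerate falling factorial `(x)_{n,λ}`. -/
noncomputable def degFall (lam x : ℝ) (n : ℕ) : ℝ := ∏ i ∈ Finset.range n, (x - i * lam)

/-- Degenerate Bell polynomial `Bel_{n,λ}(x) = e^{-x} ∑_{k≥0} (k)_{n,λ} x^k / k!`. -/
noncomputable def Bel (lam x : ℝ) (n : ℕ) : ℝ :=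
  Real.exp (-x) * ∑' k : ℕ, degFall lam (k : ℝ) n * x ^ k / (Nat.factorial k)

/-! Both sides equal `e^{-x-y} ∑_{i,j} (i + j)_{n,λ} x^i y^j / (i! j!)`: on the left by the binomial
theorem for `(x + y)^k / k!`, on the right by the Cauchy product of the two series after expanding
`(i + j)_{n,λ}` by the Vandermonde identity for degenerate falling factorials. -/

section

variable (lam : ℝ)

theorem degFall_succ (x : ℝ) (n : ℕ) : degFall lam x (n + 1) = degFall lam x n * (x - n * lam) :=
  prod_range_succ _ n

theorem degFall_add (a b : ℝ) (n : ℕ) :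
    degFall lam (a + b) n =
      ∑ ij ∈ antidiagonal n, (n.choose ij.1 : ℝ) * (degFall lam a ij.1 * degFall lam b ij.2) := by
  induction n with
  | zero => simp [degFall]
  | succ n ih =>
    rw [sum_antidiagonal_choose_succ_mul (fun i j => degFall lam a i * degFall lam b j),
      ← sum_add_distrib, degFall_succ, ih, sum_mul]
    refine sum_congr rfl fun ij hmem => ?_
    have hij : ij.1 + ij.2 = n := mem_antidiagonal.mp hmem
    -- `a + b - nλ = (a - iλ) + (b - jλ)` splits the new factor between the two old ones
    have hn : (n : ℝ) = ij.1 + ij.2 := by exact_mod_cast hij.symm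
    rw [degFall_succ, degFall_succ, Nat.choose_symm_of_eq_add hij.symm, hn]
    ring

theorem abs_degFall_le (x : ℝ) (n : ℕ) : |degFall lam x n| ≤ (|x| + n * |lam|) ^ n := by
  rw [degFall, abs_prod]
  calc ∏ i ∈ range n, |x - i * lam| ≤ ∏ _i ∈ range n, (|x| + n * |lam|) := by
        refine prod_le_prod (fun _ _ => abs_nonneg _) fun i hi => ?_
        have hin : (i : ℝ) ≤ n := by exact_mod_cast (mem_range.mp hi).le
        calc |x - i * lam| ≤ |x| + i * |lam| := by simpa [abs_mul] using abs_sub x (i * lam)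
          _ ≤ |x| + n * |lam| := by gcongr
    _ = (|x| + n * |lam|) ^ n := by rw [prod_const, card_range]

theorem summable_norm_degFall_mul_pow_div_factorial (x : ℝ) (n : ℕ) :
    Summable fun k : ℕ => ‖degFall lam k n * x ^ k / k.factorial‖ := by
  set c := n * |lam|
  refine .of_nonneg_of_le (fun _ => norm_nonneg _) (fun k => ?_)
    ((Real.summable_pow_div_factorial (Real.exp 1 * |x|)).mul_left (n.factorial * Real.exp c))
  -- `t^n ≤ n! e^t` turns the polynomial growth of `(k)_{n,λ}` into a geometric factor `e^k`
  have hpoly : |degFall lam k n| ≤ n.factorial * (Real.exp c * Real.exp 1 ^ k) := by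
    calc |degFall lam k n| ≤ (k + c) ^ n := by simpa using abs_degFall_le lam k n
      _ ≤ n.factorial * Real.exp (k + c) := by
        rw [← div_le_iff₀' (by positivity)]
        exact Real.pow_div_factorial_le_exp _ (by positivity) n
      _ = n.factorial * (Real.exp c * Real.exp 1 ^ k) := by
        rw [Real.exp_one_pow, Real.exp_add, mul_comm (Real.exp _)]
  rw [norm_div, norm_mul, norm_pow, Real.norm_eq_abs, Real.norm_eq_abs, Real.norm_natCast, mul_pow]
  calc |degFall lam k n| * |x| ^ k / k.factorial
      ≤ n.factorial * (Real.exp c * Real.exp 1 ^ k) * |x| ^ k / k.factorial := by gcongr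
    _ = _ := by ring

theorem degFall_mul_add_pow_div_factorial (x y : ℝ) (n k : ℕ) :
    degFall lam k n * (x + y) ^ k / k.factorial =
      ∑ ij ∈ antidiagonal n, (n.choose ij.1 : ℝ) * ∑ pq ∈ antidiagonal k,
        degFall lam pq.1 ij.1 * x ^ pq.1 / pq.1.factorial *
          (degFall lam pq.2 ij.2 * y ^ pq.2 / pq.2.factorial) := by
  simp_rw [mul_sum]
  rw [sum_comm, (Commute.all x y).add_pow', mul_sum, sum_div]
  refine sum_congr rfl fun pq hmem => ?_
  have hpq : pq.1 + pq.2 = k := mem_antidiagonal.mp hmem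
  have hk : (k : ℝ) = pq.1 + pq.2 := by exact_mod_cast hpq.symm
  rw [hk, degFall_add, sum_mul, sum_div]
  refine sum_congr rfl fun ij _ => ?_
  rw [nsmul_eq_mul, ← hpq, Nat.cast_add_choose]
  field_simp

theorem tsum_degFall_mul_add_pow_div_factorial (x y : ℝ) (n : ℕ) :
    ∑' k : ℕ, degFall lam k n * (x + y) ^ k / k.factorial =
      ∑ ij ∈ antidiagonal n, (n.choose ij.1 : ℝ) *
        ((∑' k : ℕ, degFall lam k ij.1 * x ^ k / k.factorial) *
          ∑' k : ℕ, degFall lam k ij.2 * y ^ k / k.factorial) := by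
  have hx := summable_norm_degFall_mul_pow_div_factorial lam x
  have hy := summable_norm_degFall_mul_pow_div_factorial lam y
  calc ∑' k : ℕ, degFall lam k n * (x + y) ^ k / k.factorial
      = ∑' k : ℕ, ∑ ij ∈ antidiagonal n, (n.choose ij.1 : ℝ) * ∑ pq ∈ antidiagonal k,
          degFall lam pq.1 ij.1 * x ^ pq.1 / pq.1.factorial *
            (degFall lam pq.2 ij.2 * y ^ pq.2 / pq.2.factorial) :=
        tsum_congr (degFall_mul_add_pow_div_factorial lam x y n)
    _ = _ := by
        have hprod (ij : ℕ × ℕ) := summable_norm_sum_mul_antidiagonal_of_summable_norm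
          (f := fun k : ℕ => degFall lam k ij.1 * x ^ k / k.factorial)
          (g := fun k : ℕ => degFall lam k ij.2 * y ^ k / k.factorial) (hx ij.1) (hy ij.2)
        rw [Summable.tsum_finsetSum fun ij _ => (hprod ij).of_norm.mul_left _]
        refine sum_congr rfl fun ij _ => ?_
        rw [tsum_mul_left,
          tsum_mul_tsum_eq_tsum_sum_antidiagonal_of_summable_norm (hx ij.1) (hy ij.2)]

end

/-- the binomial-type addition formula for degenerate Bell polynomials. -/
theorem degenerate_bell_add (lam : ℝ) (n : ℕ) (x y : ℝ) :
    Bel lam (x + y) n =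
      ∑ l ∈ range (n + 1), (n.choose l : ℝ) * Bel lam x l * Bel lam y (n - l) := by
  rw [← Nat.sum_antidiagonal_eq_sum_range_succ
      (fun i j => (n.choose i : ℝ) * Bel lam x i * Bel lam y j),
    Bel, tsum_degFall_mul_add_pow_div_factorial, neg_add, Real.exp_add, mul_sum]
  refine sum_congr rfl fun ij _ => ?_
  rw [Bel, Bel]
  ring
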